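/- arXiv:2506.17070 — 3 statements merged into one kernel-verified Lean document; each statement's English description precedes it below -/
import Mathlib

section
/- In the symmetric group 𝔖_n, the Demazure operators ∂_k on the polynomial ring k[x_1,…,x_n], defined by ∂_k(f) = (s_k(f) - f)/(x_k - x_{k+1}), satisfy the braid relations: ∂_k ∂_{k+1} ∂_k = ∂_{k+1} ∂_k ∂_{k+1} and ∂_k ∂_l = ∂_l ∂_k for |k-l| ≥ 2. -/
open MvPolynomial

private lemma demazure_cancelX {K : Type} [Field K] {n : ℕ} {i j : Fin n} (h : i ≠ j)
    {a b : MvPolynomial (Fin n) K}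
    (hab : (X i - X j) * a = (X i - X j) * b) : a = b :=
  mul_left_cancel₀ (sub_ne_zero.mpr (fun he => h (X_injective he))) hab

private lemma demazure_rr {K : Type} [Field K] {n : ℕ} (σ τ : Equiv.Perm (Fin n))
    (f : MvPolynomial (Fin n) K) :
    rename (⇑σ) (rename (⇑τ) f) = rename (⇑(σ * τ)) f := by
  rw [rename_rename]; rfl

/-- In the symmetric group `𝔖_n`, the Demazure operators `∂_k` on the polynomial ring
`k[x_1, …, x_n]`, defined (i.e. uniquely characterized) by
`(x_k - x_{k+1}) * ∂_k(f) = s_k(f) - f`, satisfy the braid relations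
`∂_k ∂_{k+1} ∂_k = ∂_{k+1} ∂_k ∂_{k+1}` and `∂_k ∂_l = ∂_l ∂_k` for `|k - l| ≥ 2`.
(Indices are `0`-based: `k` corresponds to the transposition `s_{k+1} = (k+1, k+2)`.) -/
theorem demazure_operators_braid_relations
    (K : Type) [Field K] (n : ℕ)
    (D : ℕ → MvPolynomial (Fin n) K → MvPolynomial (Fin n) K)
    (hD : ∀ (k : ℕ) (hk : k + 1 < n) (f : MvPolynomial (Fin n) K),
      (X (⟨k, Nat.lt_of_succ_lt hk⟩ : Fin n) - X ⟨k + 1, hk⟩) * D k f =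
        rename (Equiv.swap (⟨k, Nat.lt_of_succ_lt hk⟩ : Fin n) ⟨k + 1, hk⟩) f - f) :
    (∀ (k : ℕ), k + 2 < n → ∀ f : MvPolynomial (Fin n) K,
        D k (D (k + 1) (D k f)) = D (k + 1) (D k (D (k + 1) f))) ∧
    (∀ (k l : ℕ), l + 1 < n → k + 2 ≤ l → ∀ f : MvPolynomial (Fin n) K,
        D k (D l f) = D l (D k f)) := by
  constructor
  · -- braid relation
    intro k hk2 f
    set i : Fin n := ⟨k, Nat.lt_of_succ_lt (Nat.lt_of_succ_lt hk2)⟩ with hi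
    set j : Fin n := ⟨k + 1, Nat.lt_of_succ_lt hk2⟩ with hj
    set m : Fin n := ⟨k + 2, hk2⟩ with hm
    have hij : i ≠ j := by simp [hi, hj, Fin.ne_iff_vne]
    have hjm : j ≠ m := by simp [hj, hm, Fin.ne_iff_vne]
    have him : i ≠ m := by simp [hi, hm, Fin.ne_iff_vne]
    set s : Equiv.Perm (Fin n) := Equiv.swap i j with hs
    set t : Equiv.Perm (Fin n) := Equiv.swap j m with ht
    -- the defining equations
    have hDk : ∀ g : MvPolynomial (Fin n) K,
        (X i - X j) * D k g = rename (⇑s) g - g := by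
      intro g; exact hD k (Nat.lt_of_succ_lt hk2) g
    have hDk1 : ∀ g : MvPolynomial (Fin n) K,
        (X j - X m) * D (k + 1) g = rename (⇑t) g - g := by
      intro g; exact hD (k + 1) hk2 g
    -- images of the variables under the renamings
    have hsXi : rename (⇑s) (X i : MvPolynomial (Fin n) K) = X j := by simp [hs]
    have hsXj : rename (⇑s) (X j : MvPolynomial (Fin n) K) = X i := by simp [hs]
    have hsXm : rename (⇑s) (X m : MvPolynomial (Fin n) K) = X m := by
      simp [hs, Equiv.swap_apply_of_ne_of_ne him.symm hjm.symm]
    have htXi : rename (⇑t) (X i : MvPolynomial (Fin n) K) = X i := by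
      simp [ht, Equiv.swap_apply_of_ne_of_ne hij him]
    have htXj : rename (⇑t) (X j : MvPolynomial (Fin n) K) = X m := by simp [ht]
    have htXm : rename (⇑t) (X m : MvPolynomial (Fin n) K) = X j := by simp [ht]
    have hss : ∀ g : MvPolynomial (Fin n) K, rename (⇑s) (rename (⇑s) g) = g := by
      intro g
      rw [demazure_rr, Equiv.swap_mul_self, Equiv.Perm.coe_one, rename_id, AlgHom.id_apply]
    have htt : ∀ g : MvPolynomial (Fin n) K, rename (⇑t) (rename (⇑t) g) = g := by
      intro g
      rw [demazure_rr, Equiv.swap_mul_self, Equiv.Perm.coe_one, rename_id, AlgHom.id_apply]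
    -- s-invariance of D k g, t-invariance of D (k+1) g
    have hsinv : ∀ g : MvPolynomial (Fin n) K,
        rename (⇑s) (D k g) = D k g := by
      intro g
      have h0 := congrArg (rename (⇑s)) (hDk g)
      simp only [map_mul, map_sub, hsXi, hsXj, hss g] at h0
      apply demazure_cancelX hij
      rw [hDk g]
      linear_combination -h0
    have htinv : ∀ g : MvPolynomial (Fin n) K,
        rename (⇑t) (D (k + 1) g) = D (k + 1) g := by
      intro g
      have h0 := congrArg (rename (⇑t)) (hDk1 g)
      simp only [map_mul, map_sub, htXj, htXm, htt g] at h0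
      apply demazure_cancelX hjm
      rw [hDk1 g]
      linear_combination -h0
    -- abbreviations
    set g : MvPolynomial (Fin n) K := D k f with hg
    set g' : MvPolynomial (Fin n) K := D (k + 1) f with hg'
    set h1 : MvPolynomial (Fin n) K := D (k + 1) g with hh1
    set h2 : MvPolynomial (Fin n) K := D k g' with hh2
    -- equations for the left-hand side
    have e0 : (X i - X j) * g = rename (⇑s) f - f := hDk f
    have e1 : (X i - X j) * D k h1 = rename (⇑s) h1 - h1 := hDk h1
    have e2 : (X j - X m) * h1 = rename (⇑t) g - g := hDk1 g
    have e3 : (X i - X m) * rename (⇑s) h1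
        = rename (⇑s) (rename (⇑t) g) - g := by
      have h0 := congrArg (rename (⇑s)) e2
      simp only [map_mul, map_sub, hsXj, hsXm, hsinv f] at h0
      have hsg : rename (⇑s) g = g := hsinv f
      rw [hsg] at h0
      exact h0
    have e6 : (X i - X m) * rename (⇑t) g
        = rename (⇑t) (rename (⇑s) f) - rename (⇑t) f := by
      have h0 := congrArg (rename (⇑t)) e0
      simp only [map_mul, map_sub, htXi, htXj] at h0
      exact h0
    have e5 : (X j - X m) * rename (⇑s) (rename (⇑t) g)
        = rename (⇑s) (rename (⇑t) (rename (⇑s) f)) - rename (⇑s) (rename (⇑t) f) := by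
      have h0 := congrArg (rename (⇑s)) e6
      simp only [map_mul, map_sub, hsXi, hsXm] at h0
      exact h0
    have hL : (X i - X j) * ((X j - X m) * ((X i - X m) * D k h1))
        = rename (⇑s) (rename (⇑t) (rename (⇑s) f)) - rename (⇑s) (rename (⇑t) f)
          - rename (⇑t) (rename (⇑s) f) + rename (⇑t) f + rename (⇑s) f - f := by
      linear_combination (X j - X m) * (X i - X m) * e1 + (X j - X m) * e3
        - (X i - X m) * e2 + e5 - e6 + e0
    -- equations for the right-hand side
    have r0 : (X j - X m) * g' = rename (⇑t) f - f := hDk1 f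
    have r1 : (X j - X m) * D (k + 1) h2 = rename (⇑t) h2 - h2 := hDk1 h2
    have r2 : (X i - X j) * h2 = rename (⇑s) g' - g' := hDk g'
    have r3 : (X i - X m) * rename (⇑t) h2
        = rename (⇑t) (rename (⇑s) g') - g' := by
      have h0 := congrArg (rename (⇑t)) r2
      simp only [map_mul, map_sub, htXi, htXj, htinv f] at h0
      have htg : rename (⇑t) g' = g' := htinv f
      rw [htg] at h0
      exact h0
    have r6 : (X i - X m) * rename (⇑s) g'
        = rename (⇑s) (rename (⇑t) f) - rename (⇑s) f := by
      have h0 := congrArg (rename (⇑s)) r0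
      simp only [map_mul, map_sub, hsXj, hsXm] at h0
      exact h0
    have r5 : (X i - X j) * rename (⇑t) (rename (⇑s) g')
        = rename (⇑t) (rename (⇑s) (rename (⇑t) f)) - rename (⇑t) (rename (⇑s) f) := by
      have h0 := congrArg (rename (⇑t)) r6
      simp only [map_mul, map_sub, htXi, htXm] at h0
      exact h0
    have hR : (X i - X j) * ((X j - X m) * ((X i - X m) * D (k + 1) h2))
        = rename (⇑t) (rename (⇑s) (rename (⇑t) f)) - rename (⇑t) (rename (⇑s) f)
          - rename (⇑s) (rename (⇑t) f) + rename (⇑s) f + rename (⇑t) f - f := by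
      linear_combination (X i - X j) * (X i - X m) * r1 + (X i - X j) * r3
        - (X i - X m) * r2 + r5 - r6 + r0
    -- the two triple renamings agree (both are the swap (i m))
    have hsts : rename (⇑s) (rename (⇑t) (rename (⇑s) f))
        = rename (⇑t) (rename (⇑s) (rename (⇑t) f)) := by
      rw [demazure_rr, demazure_rr, demazure_rr, demazure_rr]
      have hc1 : s * t * s = Equiv.swap i m := by
        rw [hs, ht, Equiv.swap_comm i j, Equiv.swap_comm j m,
          Equiv.swap_mul_swap_mul_swap hjm.symm him.symm, Equiv.swap_comm]
      have hc2 : t * s * t = Equiv.swap i m := by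
        rw [hs, ht, Equiv.swap_mul_swap_mul_swap hij him,
          Equiv.swap_comm]
      rw [hc1, hc2]
    -- conclude by cancelling the three nonzero linear factors
    apply demazure_cancelX hij
    apply demazure_cancelX hjm
    apply demazure_cancelX him
    calc (X i - X m) * ((X j - X m) * ((X i - X j) * D k h1))
        = (X i - X j) * ((X j - X m) * ((X i - X m) * D k h1)) := by ring
      _ = (X i - X j) * ((X j - X m) * ((X i - X m) * D (k + 1) h2)) := by
          rw [hL, hR, hsts]; ring
      _ = (X i - X m) * ((X j - X m) * ((X i - X j) * D (k + 1) h2)) := by ring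
  · -- commuting relation
    intro k l hl hkl f
    have hk1 : k + 1 < n := by omega
    set i : Fin n := ⟨k, Nat.lt_of_succ_lt hk1⟩ with hi
    set j : Fin n := ⟨k + 1, hk1⟩ with hj
    set p : Fin n := ⟨l, Nat.lt_of_succ_lt hl⟩ with hp
    set q : Fin n := ⟨l + 1, hl⟩ with hq
    have hij : i ≠ j := by simp [hi, hj, Fin.ne_iff_vne]
    have hpq : p ≠ q := by simp [hp, hq, Fin.ne_iff_vne]
    have hip : i ≠ p := by simp [hi, hp, Fin.ne_iff_vne]; omega
    have hiq : i ≠ q := by simp [hi, hq, Fin.ne_iff_vne]; omega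
    have hjp : j ≠ p := by simp [hj, hp, Fin.ne_iff_vne]; omega
    have hjq : j ≠ q := by simp [hj, hq, Fin.ne_iff_vne]; omega
    set s : Equiv.Perm (Fin n) := Equiv.swap i j with hs
    set t : Equiv.Perm (Fin n) := Equiv.swap p q with ht
    have hDk : ∀ g : MvPolynomial (Fin n) K,
        (X i - X j) * D k g = rename (⇑s) g - g := by
      intro g; exact hD k hk1 g
    have hDl : ∀ g : MvPolynomial (Fin n) K,
        (X p - X q) * D l g = rename (⇑t) g - g := by
      intro g; exact hD l hl g
    have hsXp : rename (⇑s) (X p : MvPolynomial (Fin n) K) = X p := by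
      simp [hs, Equiv.swap_apply_of_ne_of_ne hip.symm hjp.symm]
    have hsXq : rename (⇑s) (X q : MvPolynomial (Fin n) K) = X q := by
      simp [hs, Equiv.swap_apply_of_ne_of_ne hiq.symm hjq.symm]
    have htXi : rename (⇑t) (X i : MvPolynomial (Fin n) K) = X i := by
      simp [ht, Equiv.swap_apply_of_ne_of_ne hip hiq]
    have htXj : rename (⇑t) (X j : MvPolynomial (Fin n) K) = X j := by
      simp [ht, Equiv.swap_apply_of_ne_of_ne hjp hjq]
    have hdisj : Equiv.Perm.Disjoint s t := by
      intro x
      by_cases h1 : x = i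
      · right; subst h1; rw [ht, Equiv.swap_apply_of_ne_of_ne hip hiq]
      by_cases h2 : x = j
      · right; subst h2; rw [ht, Equiv.swap_apply_of_ne_of_ne hjp hjq]
      · left; rw [hs, Equiv.swap_apply_of_ne_of_ne h1 h2]
    have hst : rename (⇑s) (rename (⇑t) f) = rename (⇑t) (rename (⇑s) f) := by
      rw [demazure_rr, demazure_rr, hdisj.commute.eq]
    have e0 : (X p - X q) * D l f = rename (⇑t) f - f := hDl f
    have e1 : (X i - X j) * D k (D l f) = rename (⇑s) (D l f) - D l f := hDk (D l f)
    have e2 : (X p - X q) * rename (⇑s) (D l f)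
        = rename (⇑s) (rename (⇑t) f) - rename (⇑s) f := by
      have h0 := congrArg (rename (⇑s)) e0
      simp only [map_mul, map_sub, hsXp, hsXq] at h0
      exact h0
    have r0 : (X i - X j) * D k f = rename (⇑s) f - f := hDk f
    have r1 : (X p - X q) * D l (D k f) = rename (⇑t) (D k f) - D k f := hDl (D k f)
    have r2 : (X i - X j) * rename (⇑t) (D k f)
        = rename (⇑t) (rename (⇑s) f) - rename (⇑t) f := by
      have h0 := congrArg (rename (⇑t)) r0
      simp only [map_mul, map_sub, htXi, htXj] at h0
      exact h0
    apply demazure_cancelX hij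
    apply demazure_cancelX hpq
    calc (X p - X q) * ((X i - X j) * D k (D l f))
        = rename (⇑s) (rename (⇑t) f) - rename (⇑s) f - rename (⇑t) f + f := by
          linear_combination (X p - X q) * e1 + e2 - e0
      _ = (X p - X q) * ((X i - X j) * D l (D k f)) := by
          rw [hst]
          linear_combination -((X i - X j) * r1) - r2 + r0
end

section
/- In the nil-Hecke algebra on n strands (generated by commuting variables x_1,…,x_n and elements τ_1,…,τ_{n-1} with τ_k² = 0, braid relations among the τ_k, τ_k x_k = x_{k+1}τ_k - 1, x_k τ_k = τ_k x_{k+1} - 1, and τ commuting with distant variables), the element b = x_2 x_3² ⋯ x_n^{n-1} τ_{w_0}, where τ_{w_0} is the product of τ's along a reduced word of the longest element w_0 ∈ 𝔖_n, is an idempotent: b² = b. -/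
/-!
Write `T` for `τ_{w_0}` and `D_m = τ_{m-1} ⋯ τ_0`, so that the longest word of `𝔖_{m+1}` gives
`T_{m+1} = T_m D_m`. Since `w_0 s_k < w_0`, `T τ_k = 0`; together with
`x_{k+1} τ_k = τ_k x_k + 1` this gives `T f τ_k = T ∂_k f` for the complete homogeneous
polynomials `f = h_{k+1}(x_{k+1}, …, x_j)`, whose divided difference is
`h_k(x_k, x_{k+1}, …, x_j)`. Applying this for `k = m-1, …, 0` yields `T x_m^m D_m = T`, and
induction on `m` gives `T (x_1 x_2² ⋯ x_{n-1}^{n-1}) T = T`, hence `b² = b`.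
-/

/-- The list `s_1 (s_2 s_1) (s_3 s_2 s_1) ⋯ (s_{n-1} ⋯ s_1)` (with `0`-based indices),
a reduced word for the longest element `w_0` of `𝔖_n`. -/
def nilHeckeLongestWord (n : ℕ) : List ℕ :=
  (((List.range n).map fun j => (List.range j).reverse).flatten)

namespace NilHecke

variable {A : Type*} [Ring A]

/-- `h_m` evaluated at the entries of `L`: monomials of `h_{m+1}(a, L)` either avoid `a` or are
`a` times a monomial of `h_m(a, L)`. -/
def completeHomogeneous : ℕ → List A → A
  | 0, _ => 1
  | _ + 1, [] => 0
  | m + 1, a :: L => completeHomogeneous (m + 1) L + a * completeHomogeneous m (a :: L)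
termination_by m L => (m, L.length)

@[simp]
lemma completeHomogeneous_zero (L : List A) : completeHomogeneous 0 L = 1 := by
  cases L <;> rw [completeHomogeneous]

@[simp]
lemma completeHomogeneous_succ_nil (m : ℕ) : completeHomogeneous (m + 1) ([] : List A) = 0 := by
  rw [completeHomogeneous]

lemma completeHomogeneous_succ_cons (m : ℕ) (a : A) (L : List A) :
    completeHomogeneous (m + 1) (a :: L) =
      completeHomogeneous (m + 1) L + a * completeHomogeneous m (a :: L) := by
  rw [completeHomogeneous]

lemma completeHomogeneous_singleton (m : ℕ) (a : A) : completeHomogeneous m [a] = a ^ m := by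
  induction m with
  | zero => simp
  | succ m ih =>
    rw [completeHomogeneous_succ_cons, ih, completeHomogeneous_succ_nil, zero_add, pow_succ']

lemma commute_completeHomogeneous {t : A} (m : ℕ) {L : List A} (h : ∀ c ∈ L, Commute t c) :
    Commute t (completeHomogeneous m L) := by
  induction m, L using completeHomogeneous.induct with
  | case1 => simp
  | case2 => simp
  | case3 m a L ih₁ ih₂ =>
    rw [completeHomogeneous_succ_cons]
    exact (ih₁ fun c hc => h c (List.mem_cons_of_mem a hc)).add_right
      ((h a List.mem_cons_self).mul_right (ih₂ h))

lemma completeHomogeneous_succ_cons_cons {a b : A} (hab : Commute a b) (m : ℕ) (L : List A) :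
    completeHomogeneous (m + 1) (a :: b :: L) =
      completeHomogeneous (m + 1) (a :: L) + b * completeHomogeneous m (a :: b :: L) := by
  induction m with
  | zero =>
    simp only [zero_add, completeHomogeneous_succ_cons, completeHomogeneous_zero, mul_one]
    abel
  | succ m ih =>
    conv_lhs => rw [completeHomogeneous_succ_cons _ a, completeHomogeneous_succ_cons _ b, ih]
    conv_rhs => rw [completeHomogeneous_succ_cons _ a L, completeHomogeneous_succ_cons m a (b :: L)]
    simp only [mul_add, ← mul_assoc, hab.eq]
    abel

/-- The nil-Hecke rule `f τ = τ (s f) + ∂ f` for `f = h_{m+1}(a, L)`, where `s` swaps `a` and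
`b`. -/
theorem completeHomogeneous_cons_mul {a b t : A} (hab : Commute a b) (ht : a * t = t * b + 1)
    {L : List A} (hL : ∀ c ∈ L, Commute t c) (m : ℕ) :
    completeHomogeneous (m + 1) (a :: L) * t =
      t * completeHomogeneous (m + 1) (b :: L) + completeHomogeneous m (b :: a :: L) := by
  have hLt (m : ℕ) : completeHomogeneous m L * t = t * completeHomogeneous m L :=
    (commute_completeHomogeneous m hL).eq.symm
  induction m with
  | zero =>
    simp only [completeHomogeneous_succ_cons, completeHomogeneous_zero, add_mul, mul_add,
      mul_one, hLt, ht]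
    abel
  | succ m ih =>
    rw [completeHomogeneous_succ_cons _ a, add_mul, mul_assoc, ih, hLt,
      completeHomogeneous_succ_cons (m + 1) b L,
      completeHomogeneous_succ_cons_cons hab.symm m L]
    simp only [mul_add, ← mul_assoc, ht, add_mul, one_mul]
    abel

def descendingProd (τ : ℕ → A) (m : ℕ) : A := ((List.range m).reverse.map τ).prod

def longestProd (τ : ℕ → A) (m : ℕ) : A := ((nilHeckeLongestWord m).map τ).prod

def staircaseMonomial (x : ℕ → A) (m : ℕ) : A := ((List.range m).map fun i => x i ^ i).prod

lemma descendingProd_succ (τ : ℕ → A) (m : ℕ) :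
    descendingProd τ (m + 1) = τ m * descendingProd τ m := by
  simp [descendingProd, List.range_succ]

lemma descendingProd_succ' (τ : ℕ → A) (m : ℕ) :
    descendingProd τ (m + 1) = descendingProd (fun i => τ (i + 1)) m * τ 0 := by
  simp [descendingProd, List.range_succ_eq_map, Function.comp_def]

lemma longestProd_succ (τ : ℕ → A) (m : ℕ) :
    longestProd τ (m + 1) = longestProd τ m * descendingProd τ m := by
  simp [longestProd, descendingProd, nilHeckeLongestWord, List.range_succ]

lemma staircaseMonomial_succ (x : ℕ → A) (m : ℕ) :
    staircaseMonomial x (m + 1) = staircaseMonomial x m * x m ^ m := by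
  simp [staircaseMonomial, List.range_succ]

lemma add_two_le_of_mem_nilHeckeLongestWord {m i : ℕ} (hi : i ∈ nilHeckeLongestWord m) :
    i + 2 ≤ m := by
  simp only [nilHeckeLongestWord, List.mem_flatten, List.mem_map, List.mem_range] at hi
  obtain ⟨_, ⟨j, hj, rfl⟩, hij⟩ := hi
  rw [List.mem_reverse, List.mem_range] at hij
  omega

section Crossings

variable {n : ℕ} {τ : ℕ → A}

lemma commute_descendingProd (hfar : ∀ k l, k + 2 ≤ l → τ k * τ l = τ l * τ k) {m l : ℕ}
    (hml : m + 1 ≤ l) : Commute (descendingProd τ m) (τ l) := by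
  refine Commute.list_prod_left _ _ fun a ha => ?_
  obtain ⟨i, hi, rfl⟩ := List.mem_map.mp ha
  rw [List.mem_reverse, List.mem_range] at hi
  exact hfar i l (by omega)

lemma descendingProd_mul_succ
    (hbraid : ∀ k, k + 2 < n → τ k * τ (k + 1) * τ k = τ (k + 1) * τ k * τ (k + 1))
    (hfar : ∀ k l, k + 2 ≤ l → τ k * τ l = τ l * τ k) {m k : ℕ} (hmn : m < n) (hkm : k + 1 < m) :
    descendingProd τ m * τ (k + 1) = τ k * descendingProd τ m := by
  induction m with
  | zero => omega
  | succ m ih =>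
    rw [descendingProd_succ, mul_assoc]
    rcases Nat.lt_or_ge (k + 1) m with hkm' | hkm'
    · rw [ih (by omega) hkm', ← mul_assoc, ← hfar k m (by omega), mul_assoc]
    · obtain rfl : m = k + 1 := by omega
      rw [descendingProd_succ, mul_assoc, (commute_descendingProd hfar le_rfl).eq,
        ← mul_assoc, ← mul_assoc, ← hbraid k (by omega)]
      simp only [mul_assoc]

/-- Pushing `τ_k` through `τ_{m-1} ⋯ τ_0` lowers its index, which reduces the claim to
`τ_0 τ_0 = 0`. -/
lemma longestProd_mul_eq_zero (hττ : ∀ k, k + 1 < n → τ k * τ k = 0)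
    (hbraid : ∀ k, k + 2 < n → τ k * τ (k + 1) * τ k = τ (k + 1) * τ k * τ (k + 1))
    (hfar : ∀ k l, k + 2 ≤ l → τ k * τ l = τ l * τ k) {m k : ℕ} (hmn : m ≤ n) (hkm : k + 1 < m) :
    longestProd τ m * τ k = 0 := by
  induction m generalizing k with
  | zero => omega
  | succ m ih =>
    rw [longestProd_succ, mul_assoc]
    cases k with
    | zero =>
      obtain ⟨p, rfl⟩ : ∃ p, m = p + 1 := ⟨m - 1, by omega⟩
      rw [descendingProd_succ', mul_assoc, hττ 0 (by omega), mul_zero, mul_zero]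
    | succ k =>
      rw [descendingProd_mul_succ hbraid hfar (by omega) (by omega), ← mul_assoc,
        ih (by omega) (by omega), zero_mul]

end Crossings

section Polynomials

variable {n : ℕ} {x τ : ℕ → A}

theorem longestProd_mul_completeHomogeneous_mul_descendingProd
    (hxx : ∀ i j, x i * x j = x j * x i)
    (hττ : ∀ k, k + 1 < n → τ k * τ k = 0)
    (hbraid : ∀ k, k + 2 < n → τ k * τ (k + 1) * τ k = τ (k + 1) * τ k * τ (k + 1))
    (hfar : ∀ k l, k + 2 ≤ l → τ k * τ l = τ l * τ k)
    (hτx₂ : ∀ k, k + 1 < n → x (k + 1) * τ k - τ k * x k = 1)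
    (hτxfar : ∀ k l, l ≠ k → l ≠ k + 1 → τ k * x l = x l * τ k) {k d : ℕ} (hkd : k + d < n) :
    longestProd τ n * completeHomogeneous k ((List.range' k (d + 1)).map x) *
      descendingProd τ k = longestProd τ n := by
  induction k generalizing d with
  | zero => simp [descendingProd]
  | succ k ih =>
    set L := (List.range' (k + 2) d).map x
    have hL : ∀ c ∈ L, Commute (τ k) c := by
      intro c hc
      obtain ⟨i, hi, rfl⟩ := List.mem_map.mp hc
      rw [List.mem_range'_1] at hi
      exact hτxfar k i (by omega) (by omega)
    have hτ : x (k + 1) * τ k = τ k * x k + 1 := eq_add_of_sub_eq' (hτx₂ k (by omega))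
    have hrange : (List.range' (k + 1) (d + 1)).map x = x (k + 1) :: L := by
      simp [L, List.range'_succ]
    have hrange' : (List.range' k (d + 1 + 1)).map x = x k :: x (k + 1) :: L := by
      simp [L, List.range'_succ]
    calc longestProd τ n * completeHomogeneous (k + 1) ((List.range' (k + 1) (d + 1)).map x) *
          descendingProd τ (k + 1)
        = longestProd τ n * (completeHomogeneous (k + 1) (x (k + 1) :: L) * τ k) *
            descendingProd τ k := by
          rw [hrange, descendingProd_succ]
          simp only [mul_assoc]
      _ = longestProd τ n * τ k * (completeHomogeneous (k + 1) (x k :: L) * descendingProd τ k) +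
            longestProd τ n * completeHomogeneous k (x k :: x (k + 1) :: L) *
              descendingProd τ k := by
          rw [completeHomogeneous_cons_mul (hxx _ _) hτ hL]
          simp only [mul_add, add_mul, mul_assoc]
      _ = longestProd τ n := by
          rw [longestProd_mul_eq_zero hττ hbraid hfar le_rfl (by omega), zero_mul, zero_add,
            ← hrange', ih (by omega)]

theorem longestProd_mul_staircaseMonomial_mul_longestProd
    (hxx : ∀ i j, x i * x j = x j * x i)
    (hττ : ∀ k, k + 1 < n → τ k * τ k = 0)
    (hbraid : ∀ k, k + 2 < n → τ k * τ (k + 1) * τ k = τ (k + 1) * τ k * τ (k + 1))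
    (hfar : ∀ k l, k + 2 ≤ l → τ k * τ l = τ l * τ k)
    (hτx₂ : ∀ k, k + 1 < n → x (k + 1) * τ k - τ k * x k = 1)
    (hτxfar : ∀ k l, l ≠ k → l ≠ k + 1 → τ k * x l = x l * τ k) {m : ℕ} (hmn : m ≤ n) :
    longestProd τ n * staircaseMonomial x m * longestProd τ m = longestProd τ n := by
  induction m with
  | zero => simp [staircaseMonomial, longestProd, nilHeckeLongestWord]
  | succ m ih =>
    have hcomm : Commute (longestProd τ m) (x m ^ m) := by
      refine Commute.list_prod_left _ _ fun a ha => ?_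
      obtain ⟨i, hi, rfl⟩ := List.mem_map.mp ha
      have := add_two_le_of_mem_nilHeckeLongestWord hi
      exact Commute.pow_right (hτxfar i m (by omega) (by omega)) m
    calc longestProd τ n * staircaseMonomial x (m + 1) * longestProd τ (m + 1)
        = longestProd τ n * staircaseMonomial x m * longestProd τ m *
            (x m ^ m * descendingProd τ m) := by
          simp only [staircaseMonomial_succ, longestProd_succ, mul_assoc]
          rw [hcomm.left_comm]
      _ = longestProd τ n * completeHomogeneous m ((List.range' m 1).map x) *
            descendingProd τ m := by
          rw [ih (by omega), List.range'_one, List.map_singleton, completeHomogeneous_singleton,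
            mul_assoc]
      _ = longestProd τ n := longestProd_mul_completeHomogeneous_mul_descendingProd hxx hττ hbraid
          hfar hτx₂ hτxfar (by omega)

end Polynomials

end NilHecke

open NilHecke

theorem nilHecke_idempotent_general
    (A : Type) [Ring A] (n : ℕ) (x τ : ℕ → A)
    (hxx : ∀ i j, x i * x j = x j * x i)
    (hττ : ∀ k, k + 1 < n → τ k * τ k = 0)
    (hbraid : ∀ k, k + 2 < n → τ k * τ (k + 1) * τ k = τ (k + 1) * τ k * τ (k + 1))
    (hfar : ∀ k l, k + 2 ≤ l → τ k * τ l = τ l * τ k)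
    (hτx₂ : ∀ k, k + 1 < n → x (k + 1) * τ k - τ k * x k = 1)
    (hτxfar : ∀ k l, l ≠ k → l ≠ k + 1 → τ k * x l = x l * τ k) :
    (((List.range n).map fun i => x i ^ i).prod * ((nilHeckeLongestWord n).map τ).prod) *
        (((List.range n).map fun i => x i ^ i).prod * ((nilHeckeLongestWord n).map τ).prod) =
      ((List.range n).map fun i => x i ^ i).prod * ((nilHeckeLongestWord n).map τ).prod := by
  change staircaseMonomial x n * longestProd τ n * (staircaseMonomial x n * longestProd τ n) =
    staircaseMonomial x n * longestProd τ n
  rw [mul_assoc, ← mul_assoc (longestProd τ n),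
    longestProd_mul_staircaseMonomial_mul_longestProd hxx hττ hbraid hfar hτx₂ hτxfar le_rfl]

/-- In the nil-Hecke algebra on `n` strands (generated by commuting variables
`x_1, …, x_n` and elements `τ_1, …, τ_{n-1}` with `τ_k² = 0`, braid relations among the
`τ_k`, `τ_k x_{k+1} - x_k τ_k = 1 = x_{k+1} τ_k - τ_k x_k`, and `τ` commuting with distant
variables), the element `b = x_2 x_3² ⋯ x_n^{n-1} τ_{w_0}`, where `τ_{w_0}` is the product
of `τ`'s along a reduced word of the longest element `w_0 ∈ 𝔖_n`, is an idempotent: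
`b * b = b`.  (All indices are `0`-based, so `x_2 x_3² ⋯ x_n^{n-1} = ∏_{i<n} x_i^i`.) -/
theorem nilHecke_idempotent
    (A : Type) [Ring A] (n : ℕ) (x τ : ℕ → A)
    (hxx : ∀ i j, x i * x j = x j * x i)
    (hττ : ∀ k, k + 1 < n → τ k * τ k = 0)
    (hbraid : ∀ k, k + 2 < n → τ k * τ (k + 1) * τ k = τ (k + 1) * τ k * τ (k + 1))
    (hfar : ∀ k l, k + 2 ≤ l → τ k * τ l = τ l * τ k)
    (hτx₁ : ∀ k, k + 1 < n → τ k * x (k + 1) - x k * τ k = 1)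
    (hτx₂ : ∀ k, k + 1 < n → x (k + 1) * τ k - τ k * x k = 1)
    (hτxfar : ∀ k l, l ≠ k → l ≠ k + 1 → τ k * x l = x l * τ k) :
    (((List.range n).map fun i => x i ^ i).prod * ((nilHeckeLongestWord n).map τ).prod) *
        (((List.range n).map fun i => x i ^ i).prod * ((nilHeckeLongestWord n).map τ).prod) =
      ((List.range n).map fun i => x i ^ i).prod * ((nilHeckeLongestWord n).map τ).prod :=
  nilHecke_idempotent_general A n x τ hxx hττ hbraid hfar hτx₂ hτxfar
end

section
/- For each i ∈ I, the operators r_i and _jr on U_q^-(𝔤) commute: r_i ∘ (_jr) = (_jr) ∘ r_i for all i, j ∈ I. -/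
noncomputable section

open scoped TensorProduct

/-- The field `ℚ(q)` of rational functions. -/
abbrev KK : Type := RatFunc ℚ

/-- The indeterminate `q ∈ ℚ(q)`. -/
def qq : KK := RatFunc.X

/-- `q^m` for `m ∈ ℤ`. -/
def qpow (m : ℤ) : KK := qq ^ m

/-- The quantum integer `[n]_i = (q_i^n - q_i^{-n})/(q_i - q_i^{-1})` where `q_i = q^d`. -/
def qint (d n : ℤ) : KK := (qpow (d * n) - qpow (-(d * n))) / (qpow d - qpow (-d))

/-- The quantum factorial `[n]_i!`. -/
def qfact (d : ℤ) : ℕ → KK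
  | 0 => 1
  | n + 1 => qfact d n * qint d (n + 1)

/-- A symmetrizable generalized Cartan matrix `a` with symmetrizers `d i`, so that
`(α_i, α_j) = d i * a i j`. -/
structure CartanData (I : Type) : Type where
  a : I → I → ℤ
  d : I → ℤ
  d_pos : ∀ i, 0 < d i
  a_diag : ∀ i, a i i = 2
  a_offdiag : ∀ i j, i ≠ j → a i j ≤ 0
  symm : ∀ i j, d i * a i j = d j * a j i

/-- Generators of the quantum group `U_q(𝔤)` (adjoint form: `t i = q^{(α_i,α_i)/2 · h_i}`). -/
inductive QGen (I : Type) : Type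
  | e : I → QGen I
  | f : I → QGen I
  | t : I → QGen I
  | tinv : I → QGen I

variable {I : Type}

/-- The free algebra on the generators of `U_q(𝔤)`. -/
abbrev FA (I : Type) : Type := FreeAlgebra KK (QGen I)

def ge (i : I) : FA I := FreeAlgebra.ι KK (QGen.e i)
def gf (i : I) : FA I := FreeAlgebra.ι KK (QGen.f i)
def gT (i : I) : FA I := FreeAlgebra.ι KK (QGen.t i)
def gTinv (i : I) : FA I := FreeAlgebra.ι KK (QGen.tinv i)

/-- Divided power `e_i^{(s)}` in the free algebra. -/
def edp (C : CartanData I) (i : I) (s : ℕ) : FA I := (qfact (C.d i) s)⁻¹ • ge i ^ s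

/-- Divided power `f_i^{(s)}` in the free algebra. -/
def fdp (C : CartanData I) (i : I) (s : ℕ) : FA I := (qfact (C.d i) s)⁻¹ • gf i ^ s

/-- The quantum Serre element `Σ_{s} (-1)^s e_i^{(s)} e_j e_i^{(1-a_{ij}-s)}`. -/
def serreE (C : CartanData I) (i j : I) : FA I :=
  ∑ s ∈ Finset.range ((1 - C.a i j).toNat + 1),
    ((-1 : KK) ^ s) • (edp C i s * ge j * edp C i ((1 - C.a i j).toNat - s))

/-- The quantum Serre element `Σ_{s} (-1)^s f_i^{(s)} f_j f_i^{(1-a_{ij}-s)}`. -/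
def serreF (C : CartanData I) (i j : I) : FA I :=
  ∑ s ∈ Finset.range ((1 - C.a i j).toNat + 1),
    ((-1 : KK) ^ s) • (fdp C i s * gf j * fdp C i ((1 - C.a i j).toNat - s))

/-- The defining relations of the quantum group `U_q(𝔤)`. -/
inductive QRel [DecidableEq I] (C : CartanData I) : FA I → FA I → Prop
  | t_tinv (i : I) : QRel C (gT i * gTinv i) 1
  | tinv_t (i : I) : QRel C (gTinv i * gT i) 1
  | t_t (i j : I) : QRel C (gT i * gT j) (gT j * gT i)
  | t_tinv_comm (i j : I) : QRel C (gT i * gTinv j) (gTinv j * gT i)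
  | t_e (i j : I) : QRel C (gT i * ge j) (qpow (C.d i * C.a i j) • (ge j * gT i))
  | t_f (i j : I) : QRel C (gT i * gf j) (qpow (-(C.d i * C.a i j)) • (gf j * gT i))
  | e_f (i j : I) :
      QRel C (ge i * gf j - gf j * ge i)
        (if i = j then (qpow (C.d i) - qpow (-C.d i))⁻¹ • (gT i - gTinv i) else 0)
  | serre_e (i j : I) : i ≠ j → QRel C (serreE C i j) 0
  | serre_f (i j : I) : i ≠ j → QRel C (serreF C i j) 0

/-- The quantum group `U_q(𝔤)`, presented by generators and relations. -/
abbrev Uq [DecidableEq I] (C : CartanData I) : Type := RingQuot (QRel C)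

variable [DecidableEq I]

/-- The canonical map from the free algebra onto `U_q(𝔤)`. -/
def uMk (C : CartanData I) : FA I →ₐ[KK] Uq C := RingQuot.mkAlgHom KK (QRel C)

def uE (C : CartanData I) (i : I) : Uq C := uMk C (ge i)
def uF (C : CartanData I) (i : I) : Uq C := uMk C (gf i)
def uT (C : CartanData I) (i : I) : Uq C := uMk C (gT i)
def uTinv (C : CartanData I) (i : I) : Uq C := uMk C (gTinv i)

/-- Divided power `e_i^{(s)} ∈ U_q(𝔤)`. -/
def uEdp (C : CartanData I) (i : I) (s : ℕ) : Uq C := (qfact (C.d i) s)⁻¹ • uE C i ^ s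

/-- Divided power `f_i^{(s)} ∈ U_q(𝔤)`. -/
def uFdp (C : CartanData I) (i : I) (s : ℕ) : Uq C := (qfact (C.d i) s)⁻¹ • uF C i ^ s

/-- The negative half `U_q^-(𝔤)`, the subalgebra generated by the `f_i`. -/
def Uneg (C : CartanData I) : Subalgebra KK (Uq C) :=
  Algebra.adjoin KK (Set.range (uF C))

/-- The weight `-β` component of `U_q^-(𝔤)` (spanned by monomials in the `f_i` of
content `β ∈ Q_+`). -/
def negWt (C : CartanData I) (β : I →₀ ℕ) : Submodule KK (Uq C) :=
  Submodule.span KK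
    {u | ∃ w : List I, (∀ j, w.count j = β j) ∧ u = (w.map (uF C)).prod}

/-- The pairing `(α_i, β) = Σ_j β_j (α_i, α_j)` for `β ∈ Q_+`. -/
def pairB (C : CartanData I) (i : I) (β : I →₀ ℕ) : ℤ :=
  β.sum fun j m => C.d i * C.a i j * (m : ℤ)

/-- `f_j` as an element of the subalgebra `U_q^-(𝔤)`. -/
def uFneg (C : CartanData I) (j : I) : ↥(Uneg C) :=
  ⟨uF C j, Algebra.subset_adjoin ⟨j, rfl⟩⟩

/-- `t_i^m` for `m ∈ ℤ`. -/
def tpow (C : CartanData I) (i : I) (m : ℤ) : Uq C :=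
  if 0 ≤ m then uT C i ^ m.toNat else uTinv C i ^ (-m).toNat



section KashAux

variable {I : Type} [DecidableEq I] (C : CartanData I)

lemma qq_ne_zero : (qq : KK) ≠ 0 := RatFunc.X_ne_zero

lemma qpow_add (a b : ℤ) : qpow (a + b) = qpow a * qpow b := zpow_add₀ qq_ne_zero a b

lemma qpow_zero : qpow 0 = 1 := zpow_zero qq

lemma pairB_add (i : I) (β γ : I →₀ ℕ) :
    pairB C i (β + γ) = pairB C i β + pairB C i γ :=
  Finsupp.sum_add_index' (fun a => by simp) (fun a b c => by push_cast; ring)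

lemma pairB_zero (i : I) : pairB C i 0 = 0 := Finsupp.sum_zero_index

lemma pairB_single (i k : I) : pairB C i (Finsupp.single k 1) = C.d i * C.a i k := by
  simp [pairB, Finsupp.sum_single_index]

/-- The content of a word. -/
def wt (w : List I) : I →₀ ℕ := (w.map (fun k => Finsupp.single k 1)).sum

lemma wt_nil : wt ([] : List I) = 0 := rfl

lemma wt_cons (k : I) (w : List I) : wt (k :: w) = Finsupp.single k 1 + wt w := by
  simp [wt]

lemma wt_count (w : List I) (k : I) : (wt w) k = w.count k := by
  induction w with
  | nil => simp [wt]
  | cons a w ih =>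
    rw [wt_cons, Finsupp.add_apply, ih, List.count_cons]
    rcases eq_or_ne a k with h | h
    · subst h; simp [add_comm]
    · simp [h, Ne.symm h, Finsupp.single_apply]

/-- The monomial `f_{k_1} ⋯ f_{k_n}` in `U_q^-`. -/
def mon (w : List I) : ↥(Uneg C) := (w.map (uFneg C)).prod

lemma mon_nil : mon C ([] : List I) = 1 := rfl

lemma mon_cons (k : I) (w : List I) : mon C (k :: w) = uFneg C k * mon C w := by
  simp [mon]

lemma coe_mon (w : List I) : ((mon C w : ↥(Uneg C)) : Uq C) = (w.map (uF C)).prod := by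
  induction w with
  | nil => rfl
  | cons a w ih => rw [mon_cons, List.map_cons, List.prod_cons, Subalgebra.coe_mul, ih]; rfl

lemma mem_negWt_mon (w : List I) : ((mon C w : ↥(Uneg C)) : Uq C) ∈ negWt C (wt w) :=
  Submodule.subset_span ⟨w, fun k => (wt_count w k).symm, (coe_mon C w).symm ▸ rfl⟩

lemma one_mem_negWt : (1 : Uq C) ∈ negWt C 0 := by
  simpa [mon_nil, wt_nil] using mem_negWt_mon C []

lemma uF_mem_negWt (k : I) : (uF C k) ∈ negWt C (Finsupp.single k 1) := by
  have h := mem_negWt_mon C [k]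
  simpa [mon_cons, mon_nil, wt_cons, wt_nil, uFneg] using h

lemma uFneg_mem_negWt (k : I) :
    ((uFneg C k : ↥(Uneg C)) : Uq C) ∈ negWt C (Finsupp.single k 1) := uF_mem_negWt C k

lemma mul_negWt (k : I) (γ : I →₀ ℕ) (x : Uq C) (hx : x ∈ negWt C γ) :
    uF C k * x ∈ negWt C (Finsupp.single k 1 + γ) := by
  induction hx using Submodule.span_induction with
  | mem x hx =>
    obtain ⟨w, hw, rfl⟩ := hx
    refine Submodule.subset_span ⟨k :: w, fun m => ?_, by rw [List.map_cons, List.prod_cons]⟩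
    rw [List.count_cons, hw m, Finsupp.add_apply, Finsupp.single_apply]
    rcases eq_or_ne m k with h | h
    · subst h; simp [add_comm]
    · simp [h, Ne.symm h]
  | zero => simpa using Submodule.zero_mem (negWt C (Finsupp.single k 1 + γ))
  | add x y _ _ hx hy => rw [mul_add]; exact Submodule.add_mem _ hx hy
  | smul c x _ hx => rw [mul_smul_comm]; exact Submodule.smul_mem _ _ hx

lemma exists_word (l : List (Uq C)) (hl : ∀ y ∈ l, y ∈ Set.range (uF C)) :
    ∃ w : List I, l = w.map (uF C) := by
  induction l with
  | nil => exact ⟨[], rfl⟩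
  | cons a l ih =>
    obtain ⟨w, rfl⟩ := ih (fun y hy => hl y (List.mem_cons_of_mem _ hy))
    obtain ⟨kk, rfl⟩ := hl a List.mem_cons_self
    exact ⟨kk :: w, rfl⟩

lemma mem_span_mon (u : ↥(Uneg C)) : u ∈ Submodule.span KK (Set.range (mon C)) := by
  have hu : (u : Uq C) ∈ Submodule.span KK
      ((Submonoid.closure (Set.range (uF C)) : Submonoid (Uq C)) : Set (Uq C)) := by
    rw [← Algebra.adjoin_eq_span]; exact u.2
  have hsub : ((Submonoid.closure (Set.range (uF C)) : Submonoid (Uq C)) : Set (Uq C)) ⊆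
      ⇑(Uneg C).val.toLinearMap '' Set.range (mon C) := by
    intro x hx
    obtain ⟨l, hl, rfl⟩ := Submonoid.exists_list_of_mem_closure hx
    obtain ⟨w, rfl⟩ := exists_word C l hl
    exact ⟨mon C w, ⟨w, rfl⟩, coe_mon C w⟩
  have hmem := Submodule.span_mono (R := KK) hsub hu
  rw [Submodule.span_image] at hmem
  obtain ⟨v, hv, hvu⟩ := Submodule.mem_map.mp hmem
  have hveq : v = u := Subtype.ext hvu
  rwa [hveq] at hv

end KashAux

set_option maxHeartbeats 1600000 in
set_option synthInstance.maxHeartbeats 400000 in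
/-- For each `i, j ∈ I`, the operators `r_i` and `_jr` on `U_q^-(𝔤)` commute:
`r_i ∘ (_jr) = (_jr) ∘ r_i`.  Here `r_i` and `_jr` are characterized by
`r_i(f_k) = δ_{ik}`, `r_i(xy) = q^{-(α_i,γ)} r_i(x) y + x r_i(y)` for `y` of weight `-γ`,
and `_jr(f_k) = δ_{jk}`, `_jr(xy) = _jr(x) y + q^{-(α_j,β)} x (_jr(y))` for `x` of
weight `-β`. -/
theorem kashiwara_derivations_commute
    (I : Type) [DecidableEq I] (C : CartanData I) (i j : I)
    (r jr : ↥(Uneg C) →ₗ[KK] ↥(Uneg C))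
    (hr_gen : ∀ k : I, r (uFneg C k) = if i = k then 1 else 0)
    (hr_leib : ∀ (γ : I →₀ ℕ) (x y : ↥(Uneg C)), (y : Uq C) ∈ negWt C γ →
        r (x * y) = qpow (-pairB C i γ) • (r x * y) + x * r y)
    (hjr_gen : ∀ k : I, jr (uFneg C k) = if j = k then 1 else 0)
    (hjr_leib : ∀ (β : I →₀ ℕ) (x y : ↥(Uneg C)), (x : Uq C) ∈ negWt C β →
        jr (x * y) = jr x * y + qpow (-pairB C j β) • (x * jr y)) :
    ∀ u : ↥(Uneg C), r (jr u) = jr (r u) := by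
  classical
  -- `r` and `jr` kill `1`
  have r_one : r 1 = 0 := by
    have h := hr_leib 0 1 1 (one_mem_negWt C)
    simp only [mul_one, one_mul, pairB_zero, neg_zero, qpow_zero, one_smul] at h
    exact (left_eq_add.mp h)
  have jr_one : jr 1 = 0 := by
    have h := hjr_leib 0 1 1 (one_mem_negWt C)
    simp only [mul_one, one_mul, pairB_zero, neg_zero, qpow_zero, one_smul] at h
    exact (right_eq_add.mp h)
  -- the image of a monomial under `jr` lies in a weight space
  have jr_mon : ∀ w : List I, jr (mon C w) = 0 ∨
      ∃ γ' : I →₀ ℕ, ((jr (mon C w) : ↥(Uneg C)) : Uq C) ∈ negWt C γ' ∧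
        γ' + Finsupp.single j 1 = wt w := by
    intro w
    induction w with
    | nil => left; simpa [mon_nil] using jr_one
    | cons k w ih =>
      have hstep : jr (mon C (k :: w)) = (if j = k then (1 : ↥(Uneg C)) else 0) * mon C w
          + qpow (-(C.d j * C.a j k)) • (uFneg C k * jr (mon C w)) := by
        rw [mon_cons, hjr_leib (Finsupp.single k 1) _ _ (uFneg_mem_negWt C k), hjr_gen,
          pairB_single]
      rcases ih with h0 | ⟨γ', hγ', hsum⟩
      · rw [hstep, h0]
        by_cases hjk : j = k
        · right
          refine ⟨wt w, ?_, ?_⟩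
          · simpa [hjk] using mem_negWt_mon C w
          · subst hjk; rw [wt_cons]; exact add_comm _ _
        · left; simp [hjk]
      · right
        refine ⟨Finsupp.single k 1 + γ', ?_, ?_⟩
        · rw [hstep]
          have h1 : (((if j = k then (1 : ↥(Uneg C)) else 0) * mon C w : ↥(Uneg C)) : Uq C)
              ∈ negWt C (Finsupp.single k 1 + γ') := by
            by_cases hjk : j = k
            · have hwt : Finsupp.single k 1 + γ' = wt w := by
                rw [← hsum, ← hjk]; exact add_comm _ _
              rw [hwt]
              simpa [hjk] using mem_negWt_mon C w
            · simp [hjk]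
          have h2 : ((uFneg C k * jr (mon C w) : ↥(Uneg C)) : Uq C)
              ∈ negWt C (Finsupp.single k 1 + γ') := mul_negWt C k γ' _ hγ'
          push_cast
          exact Submodule.add_mem _ h1 (Submodule.smul_mem _ _ h2)
        · rw [wt_cons, ← hsum, add_assoc]
  -- commutation on monomials
  have comm_mon : ∀ w : List I, r (jr (mon C w)) = jr (r (mon C w)) := by
    intro w
    induction w with
    | nil => rw [mon_nil, jr_one, r_one, map_zero, map_zero]
    | cons k w ih =>
      set y := mon C w with hy_def
      have hy : (y : Uq C) ∈ negWt C (wt w) := mem_negWt_mon C w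
      have hfk := uFneg_mem_negWt C k
      have hjr_step : jr (mon C (k :: w)) = (if j = k then y else 0)
          + qpow (-(C.d j * C.a j k)) • (uFneg C k * jr y) := by
        rw [mon_cons, hjr_leib _ _ _ hfk, hjr_gen, pairB_single]
        congr 1
        split <;> simp [hy_def]
      have hr_step : r (mon C (k :: w)) = qpow (-pairB C i (wt w)) • (if i = k then y else 0)
          + uFneg C k * r y := by
        rw [mon_cons, hr_leib _ _ _ hy, hr_gen]
        congr 2
        split <;> simp
      have hjr_fkb : jr (uFneg C k * r y) = (if j = k then r y else 0)
          + qpow (-(C.d j * C.a j k)) • (uFneg C k * jr (r y)) := by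
        rw [hjr_leib _ _ _ hfk, hjr_gen, pairB_single]
        congr 1
        split <;> simp
      have hite_jr : jr (if i = k then y else 0) = (if i = k then jr y else 0) := by
        split <;> simp
      have hite_r : r (if j = k then y else 0) = (if j = k then r y else 0) := by
        split <;> simp
      have hRHS : jr (r (mon C (k :: w)))
          = qpow (-pairB C i (wt w)) • (if i = k then jr y else 0)
            + ((if j = k then r y else 0)
              + qpow (-(C.d j * C.a j k)) • (uFneg C k * jr (r y))) := by
        rw [hr_step, map_add, map_smul, hjr_fkb, hite_jr]
      rcases jr_mon w with h0 | ⟨γ', hγ', hsum⟩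
      · rw [← hy_def] at h0
        have hjrr : jr (r y) = 0 := by rw [← ih, h0, map_zero]
        rw [hjr_step, h0, hRHS, hjrr, h0]
        simp only [mul_zero, smul_zero, add_zero, map_add, map_zero, hite_r]
        split <;> simp
      · have hLHS : r (jr (mon C (k :: w))) = (if j = k then r y else 0)
            + qpow (-(C.d j * C.a j k)) •
              (qpow (-pairB C i γ') • ((if i = k then (1 : ↥(Uneg C)) else 0) * jr y)
                + uFneg C k * r (jr y)) := by
          rw [hjr_step, map_add, map_smul, hr_leib γ' _ _ hγ', hr_gen, hite_r]
        rw [hLHS, hRHS, ih]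
        by_cases hik : i = k
        · subst hik
          have e1 : ((if i = i then (1 : ↥(Uneg C)) else 0) : ↥(Uneg C)) = 1 := if_pos rfl
          have e2 : (if i = i then jr y else 0) = jr y := if_pos rfl
          rw [e1, e2, one_mul, smul_add]
          have hq : qpow (-(C.d j * C.a j i)) • (qpow (-pairB C i γ') • jr y)
              = qpow (-pairB C i (wt w)) • jr y := by
            rw [smul_smul, ← qpow_add]
            congr 2
            have hp : pairB C i (wt w) = pairB C i γ' + C.d i * C.a i j := by
              rw [← hsum, pairB_add, pairB_single]
            rw [hp, C.symm i j]
            ring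
          rw [hq]
          abel
        · simp only [if_neg hik, zero_mul, smul_zero, zero_add, smul_add]
  -- extend to all of `U_q^-` by linearity
  intro u
  induction mem_span_mon C u using Submodule.span_induction with
  | mem x hx => obtain ⟨w, rfl⟩ := hx; exact comm_mon w
  | zero => simp
  | add x y _ _ hx hy => simp [map_add, hx, hy]
  | smul c x _ hx => simp [map_smul, hx]


end
end
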